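/- A homogeneous operator φ on the complexified exterior algebra of an oriented odd-dimensional real inner product space preserves the odd pairing ⟨·,·⟩ (i.e., ⟨φ(α),β⟩ + (-1)^{deg(α)deg(φ)}⟨α,φ(β)⟩ = 0 for all homogeneous α,β) if and only if φ^⋆ = -*∘φ∘*, where ⋆ is the super-adjoint for the Hermitean inner product and * is the Hodge star. -/

import Mathlib

/-!
In the monomial basis `e_s` of the exterior algebra, `e_s ∧ e_{sᶜ} = ε_s e_I` with `ε_s = ±1`,
and the Hodge star is forced to be `e_t ↦ ε_t e_{tᶜ}`. In odd dimension `|s| · |sᶜ|` is even, so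
`e_s` and `e_{sᶜ}` commute and `ε_{sᶜ} = ε_s`; this gives both `** = 1` and
`⟨α, β⟩ = (α ∧ conj β, e_I) = (α, *β)`. Substituting the super-adjoint `ψ`, the pairing condition
becomes `(α, ψ(*β) + *(φ β)) = 0` for all homogeneous `α`, i.e. `ψ ∘ * = - * ∘ φ`.
-/

open ExteriorAlgebra

/-- Basis monomial of the complexified exterior algebra. -/
noncomputable def cMonomial {n : ℕ} {V : Type*} [AddCommGroup V] [Module ℂ V]
    (b : Module.Basis (Fin n) ℂ V) (s : Finset (Fin n)) : ExteriorAlgebra ℂ V :=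
  ((s.sort (· ≤ ·)).map fun i => ι ℂ (b i)).prod

namespace LinearMap

variable {R E ι : Type*} [CommRing R] [StarRing R] [AddCommGroup E] [Module R E] [DecidableEq ι]
  {b : Module.Basis ι R E} {F : E →ₗ[R] E →ₗ⋆[R] R}

theorem apply_basis_eq_repr (hF : ∀ i j, F (b i) (b j) = if i = j then 1 else 0) (x : E)
    (j : ι) : F x (b j) = b.repr x j :=
  LinearMap.congr_fun (b.ext (f₁ := F.flip (b j)) (f₂ := b.coord j) fun i => by
    simp [hF, Finsupp.single_apply]) x

theorem basis_apply_eq_star_repr (hF : ∀ i j, F (b i) (b j) = if i = j then 1 else 0) (i : ι)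
    (y : E) : F (b i) y = star (b.repr y i) := by
  conv_lhs => rw [← b.linearCombination_repr y]
  rw [Finsupp.linearCombination_apply, map_finsuppSum]
  simp only [map_smulₛₗ, hF, smul_eq_mul, mul_ite, mul_one, mul_zero, Finsupp.sum_ite_eq]
  split_ifs with h
  · rfl
  · rw [Finsupp.notMem_support_iff.mp h, star_zero]

theorem eq_zero_of_forall_basis_apply_eq_zero
    (hF : ∀ i j, F (b i) (b j) = if i = j then 1 else 0) {y : E} (h : ∀ i, F (b i) y = 0) :
    y = 0 :=
  b.ext_elem fun i => by simpa [basis_apply_eq_star_repr hF] using h i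

end LinearMap

namespace ExteriorAlgebra

open Set.powersetCard

variable {R M I : Type*} [CommRing R] [AddCommGroup M] [Module R M] [LinearOrder I]

theorem ι_mul_of_mem_exteriorPower (v : M) {k : ℕ} {y : ExteriorAlgebra R M}
    (hy : y ∈ ⋀[R]^k M) : ι R v * y = (-1 : R) ^ k • (y * ι R v) := by
  induction hy using Submodule.pow_induction_on_left' with
  | algebraMap r => simp [Algebra.commutes]
  | add x y i _ _ hx hy => simp [mul_add, add_mul, hx, hy]
  | mem_mul m hm i x _ ih =>
    obtain ⟨w, rfl⟩ := hm
    rw [← mul_assoc, eq_neg_of_add_eq_zero_left (ι_add_mul_swap v w), neg_mul, mul_assoc, ih,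
      mul_smul_comm, pow_succ, mul_neg_one, neg_smul, mul_assoc]

theorem mul_comm_of_mem_exteriorPower {k m : ℕ} {x y : ExteriorAlgebra R M}
    (hx : x ∈ ⋀[R]^k M) (hy : y ∈ ⋀[R]^m M) : x * y = (-1 : R) ^ (k * m) • (y * x) := by
  induction hx using Submodule.pow_induction_on_left' with
  | algebraMap r => simp [Algebra.commutes]
  | add x x' i _ _ hx hx' => simp [add_mul, mul_add, hx, hx']
  | mem_mul u hu i x _ ih =>
    obtain ⟨w, rfl⟩ := hu
    rw [mul_assoc, ih, mul_smul_comm, ← mul_assoc, ι_mul_of_mem_exteriorPower w hy,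
      smul_mul_assoc, smul_smul, ← pow_add, mul_assoc, Nat.succ_mul, add_comm]

variable (b : Module.Basis I R M)

theorem basis_mem_exteriorPower (s : Finset I) : b.ExteriorAlgebra s ∈ ⋀[R]^s.card M := by
  rw [basis_apply_ofCard b rfl]
  exact ιMulti_range R _ ⟨_, rfl⟩

theorem basis_repr_eq_zero_of_mem_exteriorPower {k : ℕ} {x : ExteriorAlgebra R M}
    (hx : x ∈ ⋀[R]^k M) {s : Finset I} (hs : s.card ≠ k) : b.ExteriorAlgebra.repr x s = 0 := by
  simp only [Module.Basis.ExteriorAlgebra, Module.Basis.repr_reindex_apply, prodEquiv_symm_apply]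
  exact DirectSum.IsInternal.collectedBasis_repr_of_mem_ne _ _ (Ne.symm hs) hx

theorem basis_mul_basis_of_not_disjoint {s t : Finset I} (h : ¬Disjoint s t) :
    b.ExteriorAlgebra s * b.ExteriorAlgebra t = 0 :=
  basis_mul_of_not_disjoint b (ofCard rfl) (ofCard rfl) h

theorem exists_basis_mul_basis_of_disjoint {s t : Finset I} (h : Disjoint s t) :
    ∃ ε : ℤˣ, b.ExteriorAlgebra s * b.ExteriorAlgebra t = ε • b.ExteriorAlgebra (s ∪ t) := by
  refine ⟨(permOfDisjoint (s := ofCard rfl) (t := ofCard rfl) h).sign,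
    (basis_mul_of_disjoint b (ofCard rfl) (ofCard rfl) h).trans ?_⟩
  congr 2
  exact Finset.disjUnion_eq_union s t h

section TopDegree

variable [Fintype I]

noncomputable def complSign (s : Finset I) : R :=
  b.ExteriorAlgebra.repr (b.ExteriorAlgebra s * b.ExteriorAlgebra sᶜ) Finset.univ

theorem complSign_eq_one_or_neg_one (s : Finset I) : complSign b s = 1 ∨ complSign b s = -1 := by
  obtain ⟨ε, h⟩ := exists_basis_mul_basis_of_disjoint b (disjoint_compl_right (a := s))
  rw [complSign, h, Finset.union_compl, Units.smul_def, map_zsmul]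
  rcases Int.units_eq_one_or ε with rfl | rfl <;> simp

theorem complSign_mul_self (s : Finset I) : complSign b s * complSign b s = 1 := by
  rcases complSign_eq_one_or_neg_one b s with h | h <;> simp [h]

theorem complSign_compl (hI : Odd (Fintype.card I)) (s : Finset I) :
    complSign b sᶜ = complSign b s := by
  have heven : Even (s.card * sᶜ.card) := by
    rw [Finset.card_compl]
    rcases Nat.even_or_odd s.card with h | h
    · exact h.mul_right _
    · exact (Nat.Odd.sub_odd hI h).mul_left _
  have hcomm := mul_comm_of_mem_exteriorPower (basis_mem_exteriorPower b s)
    (basis_mem_exteriorPower b sᶜ)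
  rw [heven.neg_one_pow, one_smul] at hcomm
  rw [complSign, compl_compl, ← hcomm, complSign]

theorem repr_basis_mul_basis_univ (s t : Finset I) :
    b.ExteriorAlgebra.repr (b.ExteriorAlgebra s * b.ExteriorAlgebra t) Finset.univ =
      if t = sᶜ then complSign b s else 0 := by
  split_ifs with ht
  · rw [ht, complSign]
  by_cases hst : Disjoint s t
  · obtain ⟨ε, h⟩ := exists_basis_mul_basis_of_disjoint b hst
    have hne : s ∪ t ≠ Finset.univ := fun hu => ht <|
      eq_compl_iff_isCompl.2 ⟨hst.symm, codisjoint_iff.2 (by simpa [Finset.union_comm] using hu)⟩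
    rw [h, Units.smul_def, map_zsmul, Finsupp.smul_apply, Module.Basis.repr_self,
      Finsupp.single_eq_of_ne hne.symm, smul_zero]
  · rw [basis_mul_basis_of_not_disjoint b hst, map_zero, Finsupp.zero_apply]

theorem repr_basis_mul_univ (s : Finset I) (y : ExteriorAlgebra R M) :
    b.ExteriorAlgebra.repr (b.ExteriorAlgebra s * y) Finset.univ =
      complSign b s * b.ExteriorAlgebra.repr y sᶜ := by
  refine LinearMap.congr_fun (b.ExteriorAlgebra.ext
    (f₁ := (b.ExteriorAlgebra.coord Finset.univ).comp (LinearMap.mulLeft R (b.ExteriorAlgebra s)))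
    (f₂ := complSign b s • b.ExteriorAlgebra.coord sᶜ) fun t => ?_) y
  simp [repr_basis_mul_basis_univ, Finsupp.single_apply]

structure IsHodgeStar (st : ExteriorAlgebra R M →ₗ[R] ExteriorAlgebra R M) : Prop where
  mem_exteriorPower (s : Finset I) :
    st (b.ExteriorAlgebra s) ∈ ⋀[R]^(Fintype.card I - s.card) M
  basis_mul (s t : Finset I) : s.card = t.card →
    b.ExteriorAlgebra s * st (b.ExteriorAlgebra t) =
      (if s = t then (1 : R) else 0) • b.ExteriorAlgebra Finset.univ

namespace IsHodgeStar

variable {b} {st : ExteriorAlgebra R M →ₗ[R] ExteriorAlgebra R M}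

theorem apply_basis (hst : IsHodgeStar b st) (t : Finset I) :
    st (b.ExteriorAlgebra t) = complSign b t • b.ExteriorAlgebra tᶜ := by
  refine b.ExteriorAlgebra.ext_elem fun v => ?_
  rw [map_smul, Finsupp.smul_apply, Module.Basis.repr_self, Finsupp.single_apply, smul_eq_mul,
    mul_ite, mul_one, mul_zero]
  by_cases hv : v.card = Fintype.card I - t.card
  · have hcard : vᶜ.card = t.card := by
      rw [Finset.card_compl, hv, Nat.sub_sub_self (Finset.card_le_univ t)]
    have h := congrArg (fun x => b.ExteriorAlgebra.repr x Finset.univ) (hst.basis_mul vᶜ t hcard)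
    simp only [repr_basis_mul_univ, compl_compl, map_smul, Module.Basis.repr_self,
      Finsupp.smul_apply, Finsupp.single_eq_same, smul_eq_mul, mul_one] at h
    have h' := congrArg (complSign b vᶜ * ·) h
    simp only [← mul_assoc, complSign_mul_self, one_mul] at h'
    rw [h']
    by_cases hvt : vᶜ = t
    · subst hvt
      simp
    · rw [if_neg hvt, if_neg (fun h => hvt (by rw [← h, compl_compl])), mul_zero]
  · rw [basis_repr_eq_zero_of_mem_exteriorPower b (hst.mem_exteriorPower t) hv, if_neg]
    rintro rfl
    exact hv (Finset.card_compl t)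

theorem apply_apply (hst : IsHodgeStar b st) (hI : Odd (Fintype.card I))
    (x : ExteriorAlgebra R M) : st (st x) = x := by
  refine LinearMap.congr_fun (b.ExteriorAlgebra.ext (f₁ := st ∘ₗ st) (f₂ := LinearMap.id)
    fun t => ?_) x
  rw [LinearMap.comp_apply, hst.apply_basis, map_smul, hst.apply_basis, compl_compl, smul_smul,
    complSign_compl b hI, complSign_mul_self, one_smul, LinearMap.id_apply]

end IsHodgeStar

section Sesquilinear

variable [StarRing R]

theorem star_complSign (s : Finset I) : star (complSign b s) = complSign b s := by
  rcases complSign_eq_one_or_neg_one b s with h | h <;> simp [h]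

variable {b}

theorem IsHodgeStar.sesq_mul_conj_univ {st : ExteriorAlgebra R M →ₗ[R] ExteriorAlgebra R M}
    (hst : IsHodgeStar b st) (hI : Odd (Fintype.card I))
    {F : ExteriorAlgebra R M →ₗ[R] ExteriorAlgebra R M →ₗ⋆[R] R}
    (hF : ∀ s t, F (b.ExteriorAlgebra s) (b.ExteriorAlgebra t) = if s = t then 1 else 0)
    {cj : ExteriorAlgebra R M →ₗ⋆[R] ExteriorAlgebra R M}
    (hcj : ∀ s, cj (b.ExteriorAlgebra s) = b.ExteriorAlgebra s) (x y : ExteriorAlgebra R M) :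
    F (x * cj y) (b.ExteriorAlgebra Finset.univ) = F x (st y) := by
  refine LinearMap.congr_fun (b.ExteriorAlgebra.ext
    (f₁ := (F.flip (b.ExteriorAlgebra Finset.univ)).comp ((LinearMap.mulLeft R x).comp cj))
    (f₂ := (F x).comp st) fun t => ?_) y
  rw [LinearMap.comp_apply, LinearMap.comp_apply, LinearMap.comp_apply, hcj]
  refine LinearMap.congr_fun (b.ExteriorAlgebra.ext
    (f₁ := (F.flip (b.ExteriorAlgebra Finset.univ)).comp
      (LinearMap.mulRight R (b.ExteriorAlgebra t)))
    (f₂ := F.flip (st (b.ExteriorAlgebra t))) fun s => ?_) x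
  simp only [LinearMap.comp_apply, LinearMap.flip_apply, LinearMap.mulRight_apply,
    LinearMap.apply_basis_eq_repr hF, repr_basis_mul_basis_univ, hst.apply_basis, map_smulₛₗ]
  rw [LinearMap.smul_apply, LinearMap.flip_apply, hF, starRingEnd_apply, star_complSign,
    smul_eq_mul, mul_ite, mul_one, mul_zero]
  by_cases hts : t = sᶜ
  · rw [if_pos hts, if_pos (by rw [hts, compl_compl]), hts, complSign_compl b hI]
  · rw [if_neg hts, if_neg fun h => hts (by rw [h, compl_compl])]

end Sesquilinear

end TopDegree

end ExteriorAlgebra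

theorem cMonomial_eq_basis {n : ℕ} {V : Type*} [AddCommGroup V] [Module ℂ V]
    (b : Module.Basis (Fin n) ℂ V) (s : Finset (Fin n)) :
    cMonomial b s = b.ExteriorAlgebra s := by
  rw [basis_apply_ofCard b rfl, ιMulti_family, ιMulti_apply, List.ofFn_eq_map, cMonomial,
    ← Finset.listMap_orderEmbOfFin_finRange s rfl, List.map_map]
  rfl

theorem stmt9_general {n : ℕ} (hn : Odd n) {V : Type*} [AddCommGroup V] [Module ℂ V]
    (b : Module.Basis (Fin n) ℂ V)
    (inn : ExteriorAlgebra ℂ V → ExteriorAlgebra ℂ V → ℂ)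
    (inn_addl : ∀ x y z, inn (x + y) z = inn x z + inn y z)
    (inn_addr : ∀ x y z, inn x (y + z) = inn x y + inn x z)
    (inn_sml : ∀ (c : ℂ) (x y), inn (c • x) y = c * inn x y)
    (inn_smr : ∀ (c : ℂ) (x y), inn x (c • y) = (starRingEnd ℂ) c * inn x y)
    (inn_mon : ∀ s t, inn (cMonomial b s) (cMonomial b t) = if s = t then 1 else 0)
    (cj : ExteriorAlgebra ℂ V →ₛₗ[starRingEnd ℂ] ExteriorAlgebra ℂ V)
    (cj_mon : ∀ s, cj (cMonomial b s) = cMonomial b s)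
    (st : ExteriorAlgebra ℂ V →ₗ[ℂ] ExteriorAlgebra ℂ V)
    (st_deg : ∀ s : Finset (Fin n),
      st (cMonomial b s) ∈
        (LinearMap.range (ι ℂ : V →ₗ[ℂ] ExteriorAlgebra ℂ V)) ^ (n - s.card))
    (st_char : ∀ s t : Finset (Fin n), s.card = t.card →
      cMonomial b s * st (cMonomial b t)
        = (if s = t then (1 : ℂ) else 0) • cMonomial b Finset.univ)
    (dφ : ℕ) (φ ψ : ExteriorAlgebra ℂ V →ₗ[ℂ] ExteriorAlgebra ℂ V)
    (hψ : ∀ (k : ℕ) (α : ExteriorAlgebra ℂ V),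
      α ∈ (LinearMap.range (ι ℂ : V →ₗ[ℂ] ExteriorAlgebra ℂ V)) ^ k →
      ∀ β, inn (φ α) β = (-1 : ℂ) ^ (dφ * k) * inn α (ψ β)) :
    (∀ (k : ℕ) (α : ExteriorAlgebra ℂ V),
      α ∈ (LinearMap.range (ι ℂ : V →ₗ[ℂ] ExteriorAlgebra ℂ V)) ^ k →
      ∀ β,
        inn (φ α * cj β) (cMonomial b Finset.univ)
          + (-1 : ℂ) ^ (dφ * k) * inn (α * cj (φ β)) (cMonomial b Finset.univ) = 0)
    ↔ (∀ x, ψ x = - st (φ (st x))) := by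
  let F : ExteriorAlgebra ℂ V →ₗ[ℂ] ExteriorAlgebra ℂ V →ₗ⋆[ℂ] ℂ :=
    LinearMap.mk₂'ₛₗ _ _ inn inn_addl inn_sml inn_addr inn_smr
  have hF (x y) : inn x y = F x y := rfl
  have hmon : cMonomial b = b.ExteriorAlgebra := funext (cMonomial_eq_basis b)
  rw [hmon] at inn_mon cj_mon st_deg st_char ⊢
  simp only [hF] at inn_mon hψ ⊢
  have hodd : Odd (Fintype.card (Fin n)) := by rwa [Fintype.card_fin]
  have hst : IsHodgeStar b st := ⟨by simpa only [Fintype.card_fin] using st_deg, st_char⟩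
  simp only [hst.sesq_mul_conj_univ hodd inn_mon cj_mon]
  constructor
  · intro hL x
    have hzero (β) : ψ (st β) + st (φ β) = 0 :=
      LinearMap.eq_zero_of_forall_basis_apply_eq_zero inn_mon fun s => by
        have hs := hL _ _ (basis_mem_exteriorPower b s) β
        rw [hψ _ _ (basis_mem_exteriorPower b s), ← mul_add, ← map_add] at hs
        exact (mul_eq_zero.mp hs).resolve_left (pow_ne_zero _ (by norm_num))
    rw [← add_eq_zero_iff_eq_neg, ← hzero (st x), hst.apply_apply hodd]
  · intro hR k α hα β
    rw [hψ k α hα, hR, hst.apply_apply hodd, ← mul_add, ← map_add, neg_add_cancel, map_zero,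
      mul_zero]

/-- a homogeneous operator `φ` of degree `dφ` on the complexified exterior
algebra of an oriented odd-dimensional real inner product space preserves the odd pairing
`⟨α,β⟩ = (α ∧ conj β, Ω)` in the super sense (i.e.
`⟨φ α, β⟩ + (-1)^(deg α · deg φ) ⟨α, φ β⟩ = 0` for all homogeneous `α` and all `β`)
if and only if `φ^⋆ = - * ∘ φ ∘ *`, where `ψ = φ^⋆` is the super-adjoint for the Hermitean
inner product `inn` and `*` is the Hodge star `st`. -/
theorem stmt9 {n : ℕ} (hn : Odd n) {V : Type*} [AddCommGroup V] [Module ℂ V]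
    (b : Module.Basis (Fin n) ℂ V)
    (inn : ExteriorAlgebra ℂ V → ExteriorAlgebra ℂ V → ℂ)
    (inn_addl : ∀ x y z, inn (x + y) z = inn x z + inn y z)
    (inn_addr : ∀ x y z, inn x (y + z) = inn x y + inn x z)
    (inn_sml : ∀ (c : ℂ) (x y), inn (c • x) y = c * inn x y)
    (inn_smr : ∀ (c : ℂ) (x y), inn x (c • y) = (starRingEnd ℂ) c * inn x y)
    (inn_mon : ∀ s t, inn (cMonomial b s) (cMonomial b t) = if s = t then 1 else 0)
    (cj : ExteriorAlgebra ℂ V →ₛₗ[starRingEnd ℂ] ExteriorAlgebra ℂ V)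
    (cj_mon : ∀ s, cj (cMonomial b s) = cMonomial b s)
    (cj_mul : ∀ x y, cj (x * y) = cj x * cj y)
    (st : ExteriorAlgebra ℂ V →ₗ[ℂ] ExteriorAlgebra ℂ V)
    (st_deg : ∀ s : Finset (Fin n),
      st (cMonomial b s) ∈
        (LinearMap.range (ι ℂ : V →ₗ[ℂ] ExteriorAlgebra ℂ V)) ^ (n - s.card))
    (st_char : ∀ s t : Finset (Fin n), s.card = t.card →
      cMonomial b s * st (cMonomial b t)
        = (if s = t then (1 : ℂ) else 0) • cMonomial b Finset.univ)
    (dφ : ℕ) (φ ψ : ExteriorAlgebra ℂ V →ₗ[ℂ] ExteriorAlgebra ℂ V)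
    (hφ_deg : ∀ (k : ℕ) (α : ExteriorAlgebra ℂ V),
      α ∈ (LinearMap.range (ι ℂ : V →ₗ[ℂ] ExteriorAlgebra ℂ V)) ^ k →
      φ α ∈ (LinearMap.range (ι ℂ : V →ₗ[ℂ] ExteriorAlgebra ℂ V)) ^ (k + dφ)
        ∨ φ α ∈ (LinearMap.range (ι ℂ : V →ₗ[ℂ] ExteriorAlgebra ℂ V)) ^ (k - dφ))
    (hψ : ∀ (k : ℕ) (α : ExteriorAlgebra ℂ V),
      α ∈ (LinearMap.range (ι ℂ : V →ₗ[ℂ] ExteriorAlgebra ℂ V)) ^ k →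
      ∀ β, inn (φ α) β = (-1 : ℂ) ^ (dφ * k) * inn α (ψ β)) :
    (∀ (k : ℕ) (α : ExteriorAlgebra ℂ V),
      α ∈ (LinearMap.range (ι ℂ : V →ₗ[ℂ] ExteriorAlgebra ℂ V)) ^ k →
      ∀ β,
        inn (φ α * cj β) (cMonomial b Finset.univ)
          + (-1 : ℂ) ^ (dφ * k) * inn (α * cj (φ β)) (cMonomial b Finset.univ) = 0)
    ↔ (∀ x, ψ x = - st (φ (st x))) :=
  stmt9_general hn b inn inn_addl inn_addr inn_sml inn_smr inn_mon cj cj_mon st st_deg st_char dφ φ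
    ψ hψ
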